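/- For all integers r ≥ 3 and n ≥ 2r−1 such that r−1 divides n−1, ex^conn_r(n,BP_3) = (n−1)/(r−1); moreover, the unique extremal hypergraph is the star hypergraph: there is a vertex c contained in every hyperedge, and the sets e∖{c} over all hyperedges e partition the remaining n−1 vertices into (n−1)/(r−1) sets of size r−1. -/

import Mathlib

/-!
Let `E` be a connected `r`-uniform hypergraph without Berge paths of length 3, `r ≥ 3`.
Any two edges meet: otherwise a Berge path joining them, of length at most 2, extends through
them to one of length 3. Once there are three edges, two edges cannot share two vertices (a third
edge would complete a Berge path of length 3), and then all edges pass through a common vertex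
`c`. The sets `e \ {c}` are disjoint, so `|E| (r - 1) ≤ n - 1`. Conversely, a star whose petals
partition the other `n - 1` vertices is connected and has no Berge path of length 3, because
consecutive edges of a Berge path can only meet in `c`. When `(n - 1) / (r - 1) = 2`, the two edges
of an extremal hypergraph cover the `n = 2r - 1` vertices and hence meet in exactly one vertex.
-/

namespace Berge

def IsBergePath {n : ℕ} (E : Finset (Finset (Fin n))) (k : ℕ)
    (v : Fin (k + 1) → Fin n) (f : Fin k → Finset (Fin n)) : Prop :=
  Function.Injective v ∧ Function.Injective f ∧ (∀ i, f i ∈ E) ∧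
    ∀ i : Fin k, v i.castSucc ∈ f i ∧ v i.succ ∈ f i

def HasBergePath {n : ℕ} (E : Finset (Finset (Fin n))) (k : ℕ) : Prop :=
  ∃ v f, IsBergePath E k v f

def BPFree {n : ℕ} (E : Finset (Finset (Fin n))) (k : ℕ) : Prop :=
  ¬ HasBergePath E k

def Connected {n : ℕ} (E : Finset (Finset (Fin n))) : Prop :=
  ∀ x y : Fin n, ∃ (k : ℕ) (v : Fin (k + 1) → Fin n) (f : Fin k → Finset (Fin n)),
    IsBergePath E k v f ∧ (∃ i, v i = x) ∧ (∃ i, v i = y)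

def Uniform {n : ℕ} (E : Finset (Finset (Fin n))) (r : ℕ) : Prop :=
  ∀ e ∈ E, e.card = r

noncomputable def exConn (n r k : ℕ) : ℕ :=
  sSup {m | ∃ E : Finset (Finset (Fin n)),
    Uniform E r ∧ Connected E ∧ BPFree E k ∧ E.card = m}

def IsBergeCycle {n : ℕ} (E : Finset (Finset (Fin n))) (k : ℕ)
    (v : Fin k → Fin n) (f : Fin k → Finset (Fin n)) : Prop :=
  Function.Injective v ∧ Function.Injective f ∧ (∀ i, f i ∈ E) ∧
    ∀ i : Fin k, v i ∈ f i ∧ v ⟨(i.val + 1) % k, Nat.mod_lt _ i.pos⟩ ∈ f i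

lemma _root_.Finset.exists_mem_ne_ne {α : Type*} [DecidableEq α] {s : Finset α}
    (hs : 2 < s.card) (a b : α) : ∃ c ∈ s, c ≠ a ∧ c ≠ b := by
  obtain ⟨c, hc, hcb⟩ := Finset.exists_mem_ne
    (lt_of_lt_of_le (by omega) (Finset.pred_card_le_card_erase (s := s) (a := a))) b
  exact ⟨c, Finset.mem_of_mem_erase hc, Finset.ne_of_mem_erase hc, hcb⟩

section

variable {n : ℕ} {E : Finset (Finset (Fin n))}

lemma IsBergePath.rev {k : ℕ} {v : Fin (k + 1) → Fin n} {f : Fin k → Finset (Fin n)}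
    (h : IsBergePath E k v f) : IsBergePath E k (v ∘ Fin.rev) (f ∘ Fin.rev) := by
  obtain ⟨hv, hf, hfE, hvf⟩ := h
  refine ⟨hv.comp Fin.rev_injective, hf.comp Fin.rev_injective, fun i => hfE _, fun i => ?_⟩
  simpa only [Function.comp, Fin.rev_castSucc, Fin.rev_succ, and_comm] using hvf i.rev

lemma IsBergePath.segment {k : ℕ} {v : Fin (k + 1) → Fin n} {f : Fin k → Finset (Fin n)}
    (h : IsBergePath E k v f) (i l : ℕ) (hil : i + l ≤ k) :
    IsBergePath E l (fun t => v ⟨i + t, by omega⟩) (fun t => f ⟨i + t, by omega⟩) := by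
  obtain ⟨hv, hf, hfE, hvf⟩ := h
  refine ⟨fun s t hst => ?_, fun s t hst => ?_, fun t => hfE _, fun t => hvf ⟨i + t, by omega⟩⟩
  · simpa [Fin.ext_iff] using hv hst
  · simpa [Fin.ext_iff] using hf hst

lemma HasBergePath.mono {k l : ℕ} (h : HasBergePath E k) (hlk : l ≤ k) : HasBergePath E l :=
  let ⟨_, _, hP⟩ := h
  ⟨_, _, hP.segment 0 l (by omega)⟩

lemma exists_isBergePath_of_connected (hconn : Connected E) (x y : Fin n) :
    ∃ (l : ℕ) (v : Fin (l + 1) → Fin n) (f : Fin l → Finset (Fin n)),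
      IsBergePath E l v f ∧ v 0 = x ∧ v (Fin.last l) = y := by
  obtain ⟨k, v, f, hP, i, j, hij, rfl, rfl⟩ : ∃ (k : ℕ) (v : Fin (k + 1) → Fin n)
      (f : Fin k → Finset (Fin n)), IsBergePath E k v f ∧ ∃ i j, i ≤ j ∧ v i = x ∧ v j = y := by
    obtain ⟨k, v, f, hP, ⟨i, rfl⟩, ⟨j, rfl⟩⟩ := hconn x y
    rcases le_total i j with hij | hji
    · exact ⟨k, v, f, hP, i, j, hij, rfl, rfl⟩
    · exact ⟨k, _, _, hP.rev, i.rev, j.rev, Fin.rev_le_rev.2 hji, by simp, by simp⟩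
  refine ⟨j - i, _, _, hP.segment i (j - i) (by omega), rfl, congrArg v ?_⟩
  ext
  simp only [Fin.val_last]
  omega

lemma biUnion_eq_univ_of_connected (hconn : Connected E) (hn : 2 ≤ n) :
    E.biUnion id = Finset.univ := by
  have := Fin.nontrivial_iff_two_le.2 hn
  refine Finset.eq_univ_of_forall fun x => ?_
  obtain ⟨y, hyx⟩ := exists_ne x
  obtain ⟨_ | l, v, f, hP, rfl, rfl⟩ := exists_isBergePath_of_connected hconn x y
  · exact absurd rfl hyx
  · exact Finset.mem_biUnion.2 ⟨f 0, hP.2.2.1 0, (hP.2.2.2 0).1⟩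

lemma isBergePath_zero (x : Fin n) : IsBergePath E 0 (fun _ => x) Fin.elim0 :=
  ⟨fun _ _ _ => Subsingleton.elim (α := Fin 1) _ _, fun i => i.elim0, fun i => i.elim0,
    fun i => i.elim0⟩

lemma isBergePath_one {x y : Fin n} {e : Finset (Fin n)} (he : e ∈ E) (hx : x ∈ e)
    (hy : y ∈ e) (hxy : x ≠ y) : IsBergePath E 1 ![x, y] ![e] := by
  refine ⟨fun i j h => ?_, fun _ _ _ => Subsingleton.elim _ _, fun i => by simpa, fun i => ?_⟩
  · fin_cases i <;> fin_cases j <;> simp_all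
  · fin_cases i; simp [hx, hy]

lemma isBergePath_two {x y z : Fin n} {e f : Finset (Fin n)} (he : e ∈ E) (hf : f ∈ E)
    (hx : x ∈ e) (hye : y ∈ e) (hyf : y ∈ f) (hz : z ∈ f)
    (hv : [x, y, z].Nodup) (hef : e ≠ f) : IsBergePath E 2 ![x, y, z] ![e, f] := by
  simp only [List.nodup_cons, List.mem_cons, List.not_mem_nil, or_false, not_or] at hv
  refine ⟨?_, ?_, fun i => by fin_cases i <;> simpa, fun i => ?_⟩
  · intro i j h
    fin_cases i <;> fin_cases j <;> simp_all [eq_comm]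
  · intro i j h
    fin_cases i <;> fin_cases j <;> simp_all [eq_comm]
  · fin_cases i <;> simp [*]

lemma hasBergePath_three {a b c d : Fin n} {e f g : Finset (Fin n)}
    (he : e ∈ E) (hf : f ∈ E) (hg : g ∈ E)
    (ha : a ∈ e) (hbe : b ∈ e) (hbf : b ∈ f) (hcf : c ∈ f) (hcg : c ∈ g) (hd : d ∈ g)
    (hverts : [a, b, c, d].Nodup) (hedges : [e, f, g].Nodup) : HasBergePath E 3 := by
  simp only [List.nodup_cons, List.mem_cons, List.not_mem_nil, or_false, not_or] at hverts hedges
  refine ⟨![a, b, c, d], ![e, f, g], ?_, ?_, fun i => by fin_cases i <;> simpa, fun i => ?_⟩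
  · intro i j h
    fin_cases i <;> fin_cases j <;> simp_all [eq_comm]
  · intro i j h
    fin_cases i <;> fin_cases j <;> simp_all [eq_comm]
  · fin_cases i <;> simp [*]

lemma hasBergePath_of_disjoint {e f g : Finset (Fin n)} {a b : Fin n}
    (he : e ∈ E) (hf : f ∈ E) (hg : g ∈ E) (he₂ : 1 < e.card) (hf₂ : 1 < f.card)
    (hef : Disjoint e f) (hae : a ∈ e) (hag : a ∈ g) (hbg : b ∈ g) (hbf : b ∈ f) :
    HasBergePath E 3 := by
  obtain ⟨a', ha'e, ha'a⟩ := Finset.exists_mem_ne he₂ a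
  obtain ⟨b', hb'f, hb'b⟩ := Finset.exists_mem_ne hf₂ b
  have := Finset.disjoint_left.1 hef
  exact hasBergePath_three he hg hf ha'e hae hag hbg hbf hb'f (by grind) (by grind)

lemma inter_nonempty_of_bpFree {r : ℕ} (hr : 2 ≤ r) (hu : Uniform E r) (hconn : Connected E)
    (hbp : BPFree E 3) {e f : Finset (Fin n)} (he : e ∈ E) (hf : f ∈ E) : (e ∩ f).Nonempty := by
  rw [Finset.nonempty_iff_ne_empty, Ne, ← Finset.disjoint_iff_inter_eq_empty]
  intro hef
  have he₂ : 1 < e.card := by rw [hu e he]; omega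
  have hf₂ : 1 < f.card := by rw [hu f hf]; omega
  obtain ⟨x, hx⟩ := Finset.card_pos.1 (by omega : 0 < e.card)
  obtain ⟨y, hy⟩ := Finset.card_pos.1 (by omega : 0 < f.card)
  have hxy : x ≠ y := Finset.disjoint_left.1 hef hx ∘ (· ▸ hy)
  obtain ⟨l, v, g, hP, rfl, rfl⟩ := exists_isBergePath_of_connected hconn x y
  obtain ⟨hv, hg, hgE, hvg⟩ := hP
  have hl : l < 3 := not_le.1 fun h => hbp (HasBergePath.mono ⟨v, g, hv, hg, hgE, hvg⟩ h)
  interval_cases l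
  · exact hxy rfl
  · exact hbp (hasBergePath_of_disjoint he hf (hgE 0) he₂ hf₂ hef hx (hvg 0).1 (hvg 0).2 hy)
  · -- the path `v 0 -g 0- v 1 -g 1- v 2`, continued into `f` unless `g 0` already meets `f`
    by_cases hw : v 1 ∈ f
    · exact hbp (hasBergePath_of_disjoint he hf (hgE 0) he₂ hf₂ hef hx (hvg 0).1 (hvg 0).2 hw)
    obtain ⟨t, ht, hty⟩ := Finset.exists_mem_ne hf₂ (v 2)
    have hg01 : g 0 ≠ g 1 := hg.ne (by decide)
    have hv01 : v 0 ≠ v 1 := hv.ne (by decide)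
    have hv12 : v 1 ≠ v 2 := hv.ne (by decide)
    have := Finset.disjoint_left.1 hef
    exact hbp (hasBergePath_three (hgE 0) (hgE 1) hf (hvg 0).1 (hvg 0).2 (hvg 1).1 (hvg 1).2 hy
      ht (by grind) (by grind))

lemma exists_mem_sdiff_of_ne {r : ℕ} (hu : Uniform E r) {e g : Finset (Fin n)} (he : e ∈ E)
    (hg : g ∈ E) (hge : g ≠ e) : ∃ d ∈ g, d ∉ e := by
  by_contra! h
  exact hge (Finset.eq_of_subset_of_card_le h (by rw [hu e he, hu g hg]))

lemma hasBergePath_of_pair_mem {r : ℕ} (hr : 3 ≤ r) (hu : Uniform E r)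
    {e f g : Finset (Fin n)} (he : e ∈ E) (hf : f ∈ E) (hg : g ∈ E) (hedges : [e, f, g].Nodup)
    {a b : Fin n} (hab : a ≠ b) (hae : a ∈ e) (hbe : b ∈ e) (hbf : b ∈ f) (hag : a ∈ g) :
    HasBergePath E 3 := by
  obtain ⟨d, hdg, hde⟩ := exists_mem_sdiff_of_ne hu he hg (by grind)
  by_cases hdf : d ∈ f
  · obtain ⟨p, hpe, hpa, hpb⟩ := Finset.exists_mem_ne_ne (by rw [hu e he]; omega) a b
    exact hasBergePath_three he hg hf hpe hae hag hdg hdf hbf (by grind) (by grind)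
  · obtain ⟨y, hyf, hya, hyb⟩ := Finset.exists_mem_ne_ne (by rw [hu f hf]; omega) a b
    exact hasBergePath_three hg he hf hdg hag hae hbe hbf hyf (by grind) (by grind)

lemma eq_of_mem_inter_of_bpFree {r : ℕ} (hr : 3 ≤ r) (hu : Uniform E r) (hconn : Connected E)
    (hbp : BPFree E 3) (hE : 3 ≤ E.card) {e f : Finset (Fin n)} (he : e ∈ E) (hf : f ∈ E)
    (hef : e ≠ f) {a b : Fin n} (hae : a ∈ e) (haf : a ∈ f) (hbe : b ∈ e) (hbf : b ∈ f) :
    a = b := by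
  by_contra hab
  obtain ⟨g, hg, hge, hgf⟩ : ∃ g ∈ E, g ≠ e ∧ g ≠ f := by
    have : ({e, f} : Finset _).card ≤ 2 := Finset.card_le_two
    obtain ⟨g, hg⟩ := Finset.card_pos.1 (lt_of_lt_of_le (by omega)
      (Finset.le_card_sdiff {e, f} E))
    simp only [Finset.mem_sdiff, Finset.mem_insert, Finset.mem_singleton, not_or] at hg
    exact ⟨g, hg.1, hg.2⟩
  have hedges : [e, f, g].Nodup := by grind
  obtain ⟨p, hp⟩ := inter_nonempty_of_bpFree (by omega) hu hconn hbp he hg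
  obtain ⟨hpe, hpg⟩ := Finset.mem_inter.1 hp
  by_cases hp : p = a ∨ p = b
  · rcases hp with rfl | rfl
    · exact hbp (hasBergePath_of_pair_mem hr hu he hf hg hedges hab hae hbe hbf hpg)
    · exact hbp (hasBergePath_of_pair_mem hr hu he hf hg hedges (Ne.symm hab) hbe hae haf hpg)
  obtain ⟨d, hdg, hde⟩ := exists_mem_sdiff_of_ne hu he hg hge
  exact hbp (hasBergePath_three hf he hg hbf haf hae hpe hpg hdg (by grind) (by grind))

structure IsStar (E : Finset (Finset (Fin n))) (c : Fin n) : Prop where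
  mem : ∀ e ∈ E, c ∈ e
  inter_eq : ∀ e ∈ E, ∀ f ∈ E, e ≠ f → e ∩ f = {c}

lemma exists_isStar_of_bpFree {r : ℕ} (hr : 3 ≤ r) (hu : Uniform E r) (hconn : Connected E)
    (hbp : BPFree E 3) (hE : 3 ≤ E.card) : ∃ c, IsStar E c := by
  obtain ⟨e₁, he₁, e₂, he₂, he₁₂⟩ := Finset.one_lt_card.1 (by omega : 1 < E.card)
  obtain ⟨c, hc⟩ := inter_nonempty_of_bpFree (by omega) hu hconn hbp he₁ he₂
  obtain ⟨hce₁, hce₂⟩ := Finset.mem_inter.1 hc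
  have hlinear := @eq_of_mem_inter_of_bpFree n E r hr hu hconn hbp hE
  have hmem : ∀ g ∈ E, c ∈ g := by
    intro g hg
    by_contra hcg
    obtain ⟨p, hp⟩ := inter_nonempty_of_bpFree (by omega) hu hconn hbp hg he₁
    obtain ⟨q, hq⟩ := inter_nonempty_of_bpFree (by omega) hu hconn hbp hg he₂
    obtain ⟨hpg, hpe₁⟩ := Finset.mem_inter.1 hp
    obtain ⟨hqg, hqe₂⟩ := Finset.mem_inter.1 hq
    have hpe₂ : p ∉ e₂ := fun hpe₂ => hcg (hlinear he₁ he₂ he₁₂ hpe₁ hpe₂ hce₁ hce₂ ▸ hpg)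
    obtain ⟨d, hde₂, hdc, hdq⟩ := Finset.exists_mem_ne_ne (by rw [hu e₂ he₂]; omega) c q
    exact hbp (hasBergePath_three he₁ hg he₂ hce₁ hpe₁ hpg hqg hqe₂ hde₂ (by grind) (by grind))
  refine ⟨c, ⟨hmem, fun e he f hf hef => Finset.eq_singleton_iff_unique_mem.2 ?_⟩⟩
  exact ⟨Finset.mem_inter.2 ⟨hmem e he, hmem f hf⟩, fun x hx =>
    hlinear he hf hef (Finset.mem_inter.1 hx).1 (Finset.mem_inter.1 hx).2 (hmem e he) (hmem f hf)⟩

lemma IsStar.card_mul_le {r : ℕ} {c : Fin n} (hE : IsStar E c) (hu : Uniform E r) :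
    E.card * (r - 1) ≤ n - 1 := by
  have hdisj : (E : Set (Finset (Fin n))).PairwiseDisjoint (·.erase c) := by
    intro e he f hf hef
    rw [Function.onFun, Finset.disjoint_left]
    intro x hxe hxf
    have := hE.inter_eq e he f hf hef ▸ Finset.mem_inter.2 ⟨Finset.mem_of_mem_erase hxe,
      Finset.mem_of_mem_erase hxf⟩
    exact Finset.ne_of_mem_erase hxe (Finset.mem_singleton.1 this)
  calc E.card * (r - 1) = ∑ e ∈ E, (e.erase c).card := by
        rw [Finset.sum_congr rfl fun e he => by
          rw [Finset.card_erase_of_mem (hE.mem e he), hu e he], Finset.sum_const, smul_eq_mul]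
    _ = (E.biUnion (·.erase c)).card := (Finset.card_biUnion hdisj).symm
    _ ≤ (Finset.univ.erase c).card := Finset.card_le_card fun x hx => by
        obtain ⟨e, -, hx⟩ := Finset.mem_biUnion.1 hx
        exact Finset.mem_erase.2 ⟨Finset.ne_of_mem_erase hx, Finset.mem_univ x⟩
    _ = n - 1 := by simp

lemma IsStar.bpFree {c : Fin n} (hE : IsStar E c) : BPFree E 3 := by
  rintro ⟨v, f, hv, hf, hfE, hvf⟩
  have hv₁ : v 1 ∈ f 0 ∩ f 1 := Finset.mem_inter.2 ⟨(hvf 0).2, (hvf 1).1⟩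
  have hv₂ : v 2 ∈ f 1 ∩ f 2 := Finset.mem_inter.2 ⟨(hvf 1).2, (hvf 2).1⟩
  rw [hE.inter_eq _ (hfE 0) _ (hfE 1) (hf.ne (by decide)), Finset.mem_singleton] at hv₁
  rw [hE.inter_eq _ (hfE 1) _ (hfE 2) (hf.ne (by decide)), Finset.mem_singleton] at hv₂
  exact absurd (hv (hv₁.trans hv₂.symm)) (by decide)

lemma connected_of_forall_mem {c : Fin n} (hc : ∀ e ∈ E, c ∈ e)
    (hcov : E.biUnion id = Finset.univ) : Connected E := by
  have hcov' (x : Fin n) : ∃ e ∈ E, x ∈ e := by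
    simpa using hcov.ge (Finset.mem_univ x)
  intro x y
  by_cases hxy : x = y
  · exact ⟨0, _, _, isBergePath_zero x, ⟨0, rfl⟩, ⟨0, hxy⟩⟩
  obtain ⟨f, hf, hyf⟩ := hcov' y
  by_cases hxf : x ∈ f
  · exact ⟨1, _, _, isBergePath_one hf hxf hyf hxy, ⟨0, rfl⟩, ⟨1, rfl⟩⟩
  obtain ⟨e, he, hxe⟩ := hcov' x
  by_cases hyc : y = c
  · exact ⟨1, _, _, isBergePath_one he hxe (hyc ▸ hc e he) hxy, ⟨0, rfl⟩, ⟨1, rfl⟩⟩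
  have hxc : x ≠ c := fun h => hxf (h ▸ hc f hf)
  exact ⟨2, _, _, isBergePath_two he hf hxe (hc e he) (hc f hf) hyf (by grind) (by grind),
    ⟨0, rfl⟩, ⟨2, rfl⟩⟩

lemma exists_isStar_of_eq_mul_add_one {m r : ℕ} (hm : 0 < m) (hr : 2 ≤ r)
    (hn : n = m * (r - 1) + 1) : ∃ (E : Finset (Finset (Fin n))) (c : Fin n),
      Uniform E r ∧ E.card = m ∧ IsStar E c ∧ E.biUnion id = Finset.univ := by
  obtain ⟨s, rfl⟩ : ∃ s, r = s + 1 := ⟨r - 1, by omega⟩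
  rw [Nat.add_sub_cancel] at hn
  subst hn
  -- centre `0`; the petal of edge `i` is `{(i, j).succ | j}`, through `Fin m × Fin s ≃ Fin (m * s)`
  let spoke (i : Fin m) : Fin s ↪ Fin (m * s + 1) :=
    ((Function.Embedding.sectR i (Fin s)).trans finProdFinEquiv.toEmbedding).trans (Fin.succEmb _)
  let edge (i : Fin m) : Finset (Fin (m * s + 1)) := insert 0 (Finset.univ.map (spoke i))
  have zero_notMem (i : Fin m) : 0 ∉ Finset.univ.map (spoke i) := by
    simp [spoke, eq_comm, (Fin.succ_ne_zero _).symm]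
  have mem_edge (i i' : Fin m) (j : Fin s) :
      (finProdFinEquiv (i', j)).succ ∈ edge i ↔ i' = i := by
    simp [edge, spoke, finProdFinEquiv.injective.eq_iff, eq_comm, (Fin.succ_ne_zero _).symm]
  have inter_edge (i i' : Fin m) (hii' : i ≠ i') : edge i ∩ edge i' = {0} := by
    refine Finset.eq_singleton_iff_unique_mem.2 ⟨by simp [edge], fun x hx => ?_⟩
    obtain ⟨hx, hx'⟩ := Finset.mem_inter.1 hx
    induction x using Fin.cases with
    | zero => rfl
    | succ y =>
      rw [← finProdFinEquiv.apply_symm_apply y, mem_edge] at hx hx'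
      exact absurd (hx.symm.trans hx') hii'
  have edge_injective : Function.Injective edge := fun i i' h => by
    simpa using (mem_edge i' i ⟨0, by omega⟩).1 (h ▸ (mem_edge i i ⟨0, by omega⟩).2 rfl)
  refine ⟨Finset.univ.map ⟨edge, edge_injective⟩, 0, ?_, by simp, ⟨by simp [edge], ?_⟩, ?_⟩
  · simp [Uniform, edge, Finset.card_insert_of_notMem (zero_notMem _)]
  · simp only [Finset.mem_map, Finset.mem_univ, true_and, Function.Embedding.coeFn_mk]
    rintro _ ⟨i, rfl⟩ _ ⟨i', rfl⟩ hii'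
    exact inter_edge i i' (ne_of_apply_ne edge hii')
  · refine Finset.eq_univ_of_forall fun x => Finset.mem_biUnion.2 ?_
    induction x using Fin.cases with
    | zero => exact ⟨edge ⟨0, hm⟩, by simp, by simp [edge]⟩
    | succ y =>
      refine ⟨edge (finProdFinEquiv.symm y).1, by simp, ?_⟩
      have := (mem_edge _ (finProdFinEquiv.symm y).1 (finProdFinEquiv.symm y).2).2 rfl
      rwa [Prod.mk.eta, Equiv.apply_symm_apply] at this

lemma exists_isStar_of_card_eq_two {r : ℕ} (hu : Uniform E r)
    (hcov : E.biUnion id = Finset.univ) (hE : E.card = 2) (hn : n + 1 = 2 * r) :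
    ∃ c, IsStar E c := by
  obtain ⟨e, f, hef, rfl⟩ := Finset.card_eq_two.1 hE
  have hcard : (e ∩ f).card = 1 := by
    have hunion : e ∪ f = Finset.univ := by simpa [Finset.biUnion_insert] using hcov
    have := Finset.card_union_add_card_inter e f
    rw [hunion, Finset.card_univ, Fintype.card_fin, hu e (by simp), hu f (by simp)] at this
    omega
  obtain ⟨c, hc⟩ := Finset.card_eq_one.1 hcard
  have hce : c ∈ e ∩ f := hc ▸ Finset.mem_singleton_self c
  refine ⟨c, fun g hg => ?_, fun g hg g' hg' hgg' => ?_⟩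
  · rcases Finset.mem_insert.1 hg with rfl | hg
    exacts [Finset.mem_of_mem_inter_left hce,
      Finset.mem_singleton.1 hg ▸ Finset.mem_of_mem_inter_right hce]
  · simp only [Finset.mem_insert, Finset.mem_singleton] at hg hg'
    rcases hg with rfl | rfl <;> rcases hg' with rfl | rfl
    exacts [absurd rfl hgg', hc, Finset.inter_comm g g' ▸ hc, absurd rfl hgg']

end

theorem stmt1 (r n : ℕ) (hr : 3 ≤ r) (hn : 2 * r - 1 ≤ n) (hdvd : (r - 1) ∣ (n - 1)) :
    exConn n r 3 = (n - 1) / (r - 1) ∧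
    ∀ E : Finset (Finset (Fin n)), Uniform E r → Connected E → BPFree E 3 →
      E.card = (n - 1) / (r - 1) →
      ∃ c : Fin n, (∀ e ∈ E, c ∈ e) ∧
        (∀ e ∈ E, ∀ f ∈ E, e ≠ f → e ∩ f = {c}) ∧
        E.biUnion id = Finset.univ := by
  obtain ⟨m, hm⟩ := hdvd
  rw [mul_comm] at hm
  rw [hm, Nat.mul_div_cancel m (by omega)]
  have hm2 : 2 ≤ m :=
    Nat.le_of_mul_le_mul_right (by omega : 2 * (r - 1) ≤ m * (r - 1)) (by omega)
  have hcard_le (E : Finset (Finset (Fin n))) (hu : Uniform E r) (hconn : Connected E)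
      (hbp : BPFree E 3) : E.card ≤ m := by
    by_cases hE : E.card ≤ 2
    · omega
    obtain ⟨c, hc⟩ := exists_isStar_of_bpFree hr hu hconn hbp (by omega)
    exact Nat.le_of_mul_le_mul_right (hm ▸ hc.card_mul_le hu) (by omega)
  refine ⟨IsGreatest.csSup_eq ⟨?_, ?_⟩, fun E hu hconn hbp hE => ?_⟩
  · obtain ⟨E, c, hu, hE, hc, hcov⟩ := exists_isStar_of_eq_mul_add_one (by omega) (by omega)
      (by omega : n = m * (r - 1) + 1)
    exact ⟨E, hu, connected_of_forall_mem hc.mem hcov, hc.bpFree, hE⟩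
  · rintro _ ⟨E, hu, hconn, hbp, rfl⟩
    exact hcard_le E hu hconn hbp
  · have hcov := biUnion_eq_univ_of_connected hconn (by omega)
    obtain ⟨c, hc⟩ : ∃ c, IsStar E c := by
      rcases (show m = 2 ∨ 3 ≤ m by omega) with rfl | hm3
      · exact exists_isStar_of_card_eq_two hu hcov hE (by omega)
      · exact exists_isStar_of_bpFree hr hu hconn hbp (by omega)
    exact ⟨c, hc.mem, hc.inter_eq, hcov⟩

end Berge
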